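/- In the weighted game v_n = [3n³+n²; 2n², …, 2n² (2n+1 times), 1, …, 1 (2n³ times)], for n ≥ 11 the ratio of Banzhaf swing counts satisfies η₁(v_n)/η_{2n+2}(v_n) ≥ 2.6^n/(2n+1), where η₁(v_n) ≥ C(2n, n)·C(2n³, n³) and η_{2n+2}(v_n) = Σ_{j=0}^{2n+1} C(2n+1, j)·C(2n³−1, 3n³+n²−2n²j−1) ≤ (2n+1)·C(2n, n)·C(2n³, n³+n²). -/

import Mathlib

/-- Number of `i`-swings in the weighted game with quota `q`, weight function `w`,
and player set `P`. -/
def swingCount (q : ℕ) (w : ℕ → ℕ) (P : Finset ℕ) (i : ℕ) : ℕ :=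
  (((P.erase i).powerset).filter
    (fun S => (∑ j ∈ S, w j) < q ∧ q ≤ (∑ j ∈ S, w j) + w i)).card

/-!
A coalition's weight only depends on how many heavy players (weight `2n²`) and light players
(weight `1`) it contains, so each swing count is a sum of products of two binomial coefficients.
The heavy player swings with any `n` of the other `2n` heavy players together with any `n³` light
ones, so `η₁ ≥ C(2n, n) C(2n³, n³)`. A light player swings exactly when the coalition weighs
`q - 1`; once its number `a` of heavy players is fixed this determines its light part, only
`n + 1` values of `a` are possible, and each contributes at most `C(2n+1, n) C(2n³, n³+n²)`.
Finally `C(2n³, n³) / C(2n³, n³+n²) ≥ (1 + 1/n)^(n²) ≥ 2.6ⁿ`, because `(1 + 1/n)ⁿ` increases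
and already exceeds `2.6` at `n = 11`.
-/

open Finset

namespace Finset

variable {α : Type*} [DecidableEq α] {X Y : Finset α}

theorem sum_powerset_union_of_disjoint {β : Type*} [AddCommMonoid β] (hXY : Disjoint X Y)
    (f : Finset α → β) :
    ∑ S ∈ (X ∪ Y).powerset, f S = ∑ A ∈ X.powerset, ∑ C ∈ Y.powerset, f (A ∪ C) := by
  rw [powerset_union, ← image_sup_product, sum_image, sum_product]
  · rfl
  rintro ⟨A, C⟩ hAC ⟨A', C'⟩ hAC' h
  simp only [coe_product, Set.mem_prod, mem_coe, mem_powerset] at hAC hAC'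
  have hA : ∀ {A C : Finset α}, A ⊆ X → C ⊆ Y → (A ∪ C) ∩ X = A := fun hA hC => by
    rw [union_inter_distrib_right, inter_eq_left.2 hA,
      disjoint_iff_inter_eq_empty.1 (hXY.symm.mono_left hC), union_empty]
  have hC : ∀ {A C : Finset α}, A ⊆ X → C ⊆ Y → (A ∪ C) ∩ Y = C := fun hA hC => by
    rw [union_inter_distrib_right, inter_eq_left.2 hC,
      disjoint_iff_inter_eq_empty.1 (hXY.mono_left hA), empty_union]
  have h' : A ∪ C = A' ∪ C' := h
  exact Prod.ext (by rw [← hA hAC.1 hAC.2, h', hA hAC'.1 hAC'.2])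
    (by rw [← hC hAC.1 hAC.2, h', hC hAC'.1 hAC'.2])

theorem card_filter_powerset_union_eq_sum_choose (hXY : Disjoint X Y) {w : α → ℕ} {u v : ℕ}
    (hu : ∀ j ∈ X, w j = u) (hv : ∀ j ∈ Y, w j = v) (p : ℕ → Prop) [DecidablePred p] :
    #{S ∈ (X ∪ Y).powerset | p (∑ j ∈ S, w j)} =
      ∑ a ∈ range (#X + 1), ∑ c ∈ range (#Y + 1),
        if p (u * a + v * c) then (#X).choose a * (#Y).choose c else 0 := by
  have hsum : ∀ A ∈ X.powerset, ∀ C ∈ Y.powerset, ∑ j ∈ A ∪ C, w j = u * #A + v * #C := by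
    intro A hA C hC
    rw [mem_powerset] at hA hC
    rw [sum_union (hXY.mono hA hC), sum_const_nat fun j hj => hu j (hA hj),
      sum_const_nat fun j hj => hv j (hC hj), mul_comm u, mul_comm v]
  rw [card_filter, sum_powerset_union_of_disjoint hXY]
  calc _ = ∑ A ∈ X.powerset, ∑ C ∈ Y.powerset, if p (u * #A + v * #C) then 1 else 0 :=
        sum_congr rfl fun A hA => sum_congr rfl fun C hC => by rw [hsum A hA C hC]
    _ = ∑ A ∈ X.powerset, ∑ c ∈ range (#Y + 1),
          (#Y).choose c • if p (u * #A + v * c) then 1 else 0 :=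
        sum_congr rfl fun A _ =>
          sum_powerset_apply_card (fun c => if p (u * #A + v * c) then 1 else 0)
    _ = _ := by
      rw [sum_powerset_apply_card (fun a => ∑ c ∈ range (#Y + 1),
          (#Y).choose c • if p (u * a + v * c) then 1 else 0)]
      simp [mul_sum]

end Finset

namespace Nat

theorem choose_le_choose_of_half_le {M k m : ℕ} (hM : M ≤ 2 * k + 1) (hkm : k ≤ m) :
    M.choose m ≤ M.choose k := by
  induction m, hkm using Nat.le_induction with
  | base => rfl
  | succ m hkm ih =>
    refine le_trans (Nat.le_of_mul_le_mul_right ?_ m.succ_pos) ih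
    rw [Nat.choose_succ_right_eq]
    exact Nat.mul_le_mul_left _ (by omega)

theorem choose_le_choose_of_far_from_middle {M k m : ℕ} (hM : M ≤ 2 * k + 1)
    (hm : k ≤ m ∨ m + k ≤ M) : M.choose m ≤ M.choose k := by
  rcases hm with hkm | hmk
  · exact choose_le_choose_of_half_le hM hkm
  · rw [← Nat.choose_symm (by omega : m ≤ M)]
    exact choose_le_choose_of_half_le hM (by omega)

/-- `C(2N, N) / C(2N, N+d) = ∏_{i<d} (N+d-i)/(N-i)`, and each factor is at least `(n+1)/n`. -/
theorem add_one_pow_mul_choose_le {n N d : ℕ} (h : N ≤ n * d) :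
    (n + 1) ^ d * (2 * N).choose (N + d) ≤ n ^ d * (2 * N).choose N := by
  have hchoose : (2 * N).choose (N + d) * (N + d).descFactorial d =
      (2 * N).choose N * N.descFactorial d := by
    have h := Nat.choose_mul (n := 2 * N) (k := N + d) (s := N) (by omega)
    rw [Nat.add_sub_cancel_left, show 2 * N - N = N by omega, Nat.choose_symm_add] at h
    rw [descFactorial_eq_factorial_mul_choose, descFactorial_eq_factorial_mul_choose,
      mul_left_comm, h, mul_left_comm]
  have hdesc : (n + 1) ^ d * N.descFactorial d ≤ n ^ d * (N + d).descFactorial d := by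
    rw [descFactorial_eq_prod_range, descFactorial_eq_prod_range, ← card_range d,
      ← prod_const, ← prod_const, card_range, ← prod_mul_distrib, ← prod_mul_distrib]
    refine prod_le_prod' fun i hi => ?_
    rw [mem_range] at hi
    obtain ⟨t, rfl⟩ | hNi := le_or_gt i N |>.imp Nat.exists_eq_add_of_le id
    · rw [Nat.add_sub_cancel_left, show i + t + d - i = t + d by omega]
      nlinarith
    · simp [Nat.sub_eq_zero_of_le hNi.le]
  refine Nat.le_of_mul_le_mul_right ?_ (descFactorial_pos.2 (Nat.le_add_left d N))
  calc (n + 1) ^ d * (2 * N).choose (N + d) * (N + d).descFactorial d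
      = (2 * N).choose N * ((n + 1) ^ d * N.descFactorial d) := by rw [mul_assoc, hchoose]; ring
    _ ≤ (2 * N).choose N * (n ^ d * (N + d).descFactorial d) := Nat.mul_le_mul_left _ hdesc
    _ = _ := by ring

end Nat

theorem monotone_one_add_one_div_pow : Monotone fun n : ℕ => (1 + 1 / (n : ℝ)) ^ n := by
  refine monotone_nat_of_le_succ fun n => ?_
  rcases n.eq_zero_or_pos with rfl | hn
  · norm_num
  have hx : (0 : ℝ) < n := by exact_mod_cast hn
  set x : ℝ := (n : ℝ) with hxn
  have hbern : 1 - 1 / (x + 1) ≤ (1 - 1 / (x + 1) ^ 2) ^ (n + 1) := by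
    have h := one_add_mul_le_pow (a := -(1 / (x + 1) ^ 2)) (by
      have : 1 / (x + 1) ^ 2 ≤ 1 := by rw [div_le_one (by positivity)]; nlinarith
      linarith) (n + 1)
    rwa [show (1 : ℝ) + ((n + 1 : ℕ) : ℝ) * -(1 / (x + 1) ^ 2) = 1 - 1 / (x + 1) by
        rw [Nat.cast_succ, ← hxn]; field_simp; ring, ← sub_eq_add_neg] at h
  push_cast
  calc (1 + 1 / x) ^ n = (1 + 1 / x) ^ (n + 1) * (1 - 1 / (x + 1)) := by
        rw [pow_succ]; field_simp; ring
    _ ≤ (1 + 1 / x) ^ (n + 1) * (1 - 1 / (x + 1) ^ 2) ^ (n + 1) := by gcongr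
    _ = (1 + 1 / (x + 1)) ^ (n + 1) := by
        rw [← mul_pow]; congr 1; field_simp; ring

theorem two_point_six_pow_mul_choose_le {n : ℕ} (hn : 11 ≤ n) :
    (2.6 : ℝ) ^ n * (2 * n ^ 3).choose (n ^ 3 + n ^ 2) ≤ (2 * n ^ 3).choose (n ^ 3) := by
  have hn0 : (0 : ℝ) < n := by exact_mod_cast (by omega : 0 < n)
  have hnat : ((n : ℝ) + 1) ^ n ^ 2 * (2 * n ^ 3).choose (n ^ 3 + n ^ 2) ≤
      (n : ℝ) ^ n ^ 2 * (2 * n ^ 3).choose (n ^ 3) := by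
    exact_mod_cast Nat.add_one_pow_mul_choose_le (n := n) (N := n ^ 3) (d := n ^ 2)
      (by ring_nf; rfl)
  calc (2.6 : ℝ) ^ n * (2 * n ^ 3).choose (n ^ 3 + n ^ 2)
      ≤ ((1 + 1 / (n : ℝ)) ^ n) ^ n * (2 * n ^ 3).choose (n ^ 3 + n ^ 2) := by
        gcongr
        calc (2.6 : ℝ) ≤ (1 + 1 / ((11 : ℕ) : ℝ)) ^ 11 := by norm_num
          _ ≤ (1 + 1 / (n : ℝ)) ^ n := monotone_one_add_one_div_pow hn
    _ = ((n : ℝ) + 1) ^ n ^ 2 * (2 * n ^ 3).choose (n ^ 3 + n ^ 2) / (n : ℝ) ^ n ^ 2 := by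
        rw [← pow_mul, ← sq, one_add_div hn0.ne', div_pow]; ring
    _ ≤ (2 * n ^ 3).choose (n ^ 3) := by
        rw [div_le_iff₀ (by positivity)]; linarith

section SwingCount

variable {q : ℕ} {w : ℕ → ℕ} {P X Y : Finset ℕ} {i u v : ℕ}

theorem swingCount_eq_sum_choose (hP : P.erase i = X ∪ Y) (hXY : Disjoint X Y)
    (hu : ∀ j ∈ X, w j = u) (hv : ∀ j ∈ Y, w j = v) :
    swingCount q w P i = ∑ a ∈ range (#X + 1), ∑ c ∈ range (#Y + 1),
      if u * a + v * c < q ∧ q ≤ u * a + v * c + w i then (#X).choose a * (#Y).choose c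
      else 0 := by
  rw [swingCount, hP]
  exact card_filter_powerset_union_eq_sum_choose hXY hu hv (fun s => s < q ∧ q ≤ s + w i)

theorem choose_mul_choose_le_swingCount (hP : P.erase i = X ∪ Y) (hXY : Disjoint X Y)
    (hu : ∀ j ∈ X, w j = u) (hv : ∀ j ∈ Y, w j = v) {a c : ℕ} (ha : a ≤ #X) (hc : c ≤ #Y)
    (hlt : u * a + v * c < q) (hle : q ≤ u * a + v * c + w i) :
    (#X).choose a * (#Y).choose c ≤ swingCount q w P i := by
  rw [swingCount_eq_sum_choose hP hXY hu hv]
  refine le_trans ?_ (single_le_sum (fun _ _ => Nat.zero_le _) (mem_range.2 (Nat.lt_succ_of_le ha)))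
  refine le_trans ?_ (single_le_sum (fun _ _ => Nat.zero_le _) (mem_range.2 (Nat.lt_succ_of_le hc)))
  rw [if_pos ⟨hlt, hle⟩]

theorem swingCount_eq_sum_of_unit_weight (hP : P.erase i = X ∪ Y) (hXY : Disjoint X Y)
    (hu : ∀ j ∈ X, w j = u) (hv : ∀ j ∈ Y, w j = 1) (hi : w i = 1) :
    swingCount q w P i = ∑ a ∈ range (#X + 1),
      if u * a < q ∧ q ≤ u * a + #Y + 1 then (#X).choose a * (#Y).choose (q - 1 - u * a)
      else 0 := by
  rw [swingCount_eq_sum_choose hP hXY hu hv, hi]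
  refine sum_congr rfl fun a _ => ?_
  by_cases ha : u * a < q
  · rw [sum_congr rfl fun c _ => if_congr (show _ ↔ c = q - 1 - u * a by omega) rfl rfl,
      sum_ite_eq']
    simp only [mem_range]
    exact if_congr (by omega) rfl rfl
  · rw [if_neg (by omega)]
    exact sum_eq_zero fun c _ => if_neg (by omega)

end SwingCount

/-- Players `0, …, 2n` are the heavy players `1, …, 2n+1` of `v_n` and the players from `2n+1`
on are its light ones, so `η₁` and `η_{2n+2}` are the swing counts of players `0` and `2n+1`. -/
def vWeight (n : ℕ) : ℕ → ℕ := fun i => if i < 2 * n + 1 then 2 * n ^ 2 else 1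

def vQuota (n : ℕ) : ℕ := 3 * n ^ 3 + n ^ 2

def vPlayers (n : ℕ) : Finset ℕ := range (2 * n + 1 + 2 * n ^ 3)

section WeightedGame

variable {n : ℕ}

theorem vPlayers_erase_heavy (n : ℕ) :
    (vPlayers n).erase 0 = Ico 1 (2 * n + 1) ∪ Ico (2 * n + 1) (2 * n + 1 + 2 * n ^ 3) := by
  ext j; simp only [vPlayers, mem_erase, mem_range, mem_union, mem_Ico]; omega

theorem vPlayers_erase_light (n : ℕ) :
    (vPlayers n).erase (2 * n + 1) =
      range (2 * n + 1) ∪ Ico (2 * n + 2) (2 * n + 1 + 2 * n ^ 3) := by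
  ext j; simp only [vPlayers, mem_erase, mem_range, mem_union, mem_Ico]; omega

theorem vWeight_of_lt {j : ℕ} (h : j < 2 * n + 1) : vWeight n j = 2 * n ^ 2 := if_pos h

theorem vWeight_of_ge {j : ℕ} (h : 2 * n + 1 ≤ j) : vWeight n j = 1 := if_neg h.not_gt

theorem choose_mul_choose_le_swingCount_heavy (hn : 1 ≤ n) :
    (2 * n).choose n * (2 * n ^ 3).choose (n ^ 3) ≤
      swingCount (vQuota n) (vWeight n) (vPlayers n) 0 := by
  have hn2 : 0 < n ^ 2 := by positivity
  have hcube : 2 * n ^ 2 * n = 2 * n ^ 3 := by ring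
  have h := choose_mul_choose_le_swingCount (q := vQuota n) (w := vWeight n)
    (vPlayers_erase_heavy n) (Ico_disjoint_Ico_consecutive _ _ _) (a := n) (c := n ^ 3)
    (fun j hj => vWeight_of_lt (mem_Ico.1 hj).2) (fun j hj => vWeight_of_ge (mem_Ico.1 hj).1)
    (by simp; omega) (by simp; omega) (by simp only [vQuota]; omega)
    (by simp only [vQuota, vWeight_of_lt (Nat.succ_pos _)]; omega)
  simpa using h

theorem swingCount_light_eq (n : ℕ) :
    swingCount (vQuota n) (vWeight n) (vPlayers n) (2 * n + 1) =
      ∑ a ∈ range (2 * n + 2),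
        if 2 * n ^ 2 * a < vQuota n ∧ vQuota n ≤ 2 * n ^ 2 * a + (2 * n ^ 3 - 1) + 1 then
          (2 * n + 1).choose a * (2 * n ^ 3 - 1).choose (vQuota n - 1 - 2 * n ^ 2 * a)
        else 0 := by
  have h := swingCount_eq_sum_of_unit_weight (q := vQuota n) (u := 2 * n ^ 2)
    (vPlayers_erase_light n) (disjoint_left.2 fun j hj hj' => by simp at hj hj'; omega)
    (fun j hj => vWeight_of_lt (mem_range.1 hj)) (fun j hj => vWeight_of_ge (by simp at hj; omega))
    (vWeight_of_ge le_rfl)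
  rwa [card_range, Nat.card_Ico, show 2 * n + 1 + 2 * n ^ 3 - (2 * n + 2) = 2 * n ^ 3 - 1 by omega]
    at h

theorem swingCount_light_pos (hn : 1 ≤ n) :
    0 < swingCount (vQuota n) (vWeight n) (vPlayers n) (2 * n + 1) := by
  have hn2 : 0 < n ^ 2 := by positivity
  have hn3 : n ^ 2 ≤ n ^ 3 := Nat.pow_le_pow_right hn (by norm_num)
  have hcube : 2 * n ^ 2 * n = 2 * n ^ 3 := by ring
  rw [swingCount_light_eq]
  refine lt_of_lt_of_le ?_
    (single_le_sum (fun _ _ => Nat.zero_le _) (mem_range.2 (by omega : n < 2 * n + 2)))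
  rw [if_pos (by simp only [vQuota]; omega)]
  exact Nat.mul_pos (Nat.choose_pos (by omega)) (Nat.choose_pos (by simp only [vQuota]; omega))

/-- As `2n²a` is a multiple of `2n²`, the index `q - 1 - 2n²a` is never closer than `n² - 1/2`
to the middle of the row `2n³ - 1`. -/
theorem choose_two_mul_cube_sub_one_le (hn : 1 ≤ n) (a : ℕ) :
    (2 * n ^ 3 - 1).choose (vQuota n - 1 - 2 * n ^ 2 * a) ≤
      (2 * n ^ 3).choose (n ^ 3 + n ^ 2) := by
  have hn2 : 0 < n ^ 2 := by positivity
  have hn3 : n ^ 2 ≤ n ^ 3 := Nat.pow_le_pow_right hn (by norm_num)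
  have hpascal :
      (2 * n ^ 3 - 1).choose (n ^ 3 + n ^ 2 - 1) ≤ (2 * n ^ 3).choose (n ^ 3 + n ^ 2) := by
    have h := Nat.choose_succ_succ' (2 * n ^ 3 - 1) (n ^ 3 + n ^ 2 - 1)
    rw [Nat.sub_add_cancel (by omega), Nat.sub_add_cancel (by omega)] at h
    omega
  refine le_trans (Nat.choose_le_choose_of_far_from_middle (k := n ^ 3 + n ^ 2 - 1) (by omega) ?_)
    hpascal
  rcases le_or_gt a n with ha | ha
  · have : 2 * n ^ 2 * a ≤ 2 * n ^ 3 := by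
      calc 2 * n ^ 2 * a ≤ 2 * n ^ 2 * n := Nat.mul_le_mul_left _ ha
        _ = 2 * n ^ 3 := by ring
    left; simp only [vQuota]; omega
  · have : 2 * n ^ 3 + 2 * n ^ 2 ≤ 2 * n ^ 2 * a := by
      calc 2 * n ^ 3 + 2 * n ^ 2 = 2 * n ^ 2 * (n + 1) := by ring
        _ ≤ 2 * n ^ 2 * a := Nat.mul_le_mul_left _ ha
    right; simp only [vQuota]; omega

theorem swingCount_light_le (hn : 1 ≤ n) :
    swingCount (vQuota n) (vWeight n) (vPlayers n) (2 * n + 1) ≤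
      (2 * n + 1) * (2 * n).choose n * (2 * n ^ 3).choose (n ^ 3 + n ^ 2) := by
  have hn2 : 0 < n ^ 2 := by positivity
  set K := (2 * n + 1).choose n * (2 * n ^ 3).choose (n ^ 3 + n ^ 2)
  have hterm : ∀ a,
      (if 2 * n ^ 2 * a < vQuota n ∧ vQuota n ≤ 2 * n ^ 2 * a + (2 * n ^ 3 - 1) + 1 then
        (2 * n + 1).choose a * (2 * n ^ 3 - 1).choose (vQuota n - 1 - 2 * n ^ 2 * a) else 0) ≤
      if n + 1 ≤ 2 * a ∧ 2 * a ≤ 3 * n then K else 0 := by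
    intro a
    split_ifs with h1 h2
    · refine Nat.mul_le_mul ?_ (choose_two_mul_cube_sub_one_le hn a)
      simpa [show (2 * n + 1) / 2 = n by omega] using Nat.choose_le_middle a (2 * n + 1)
    · obtain ⟨hlt, hle⟩ := h1
      rw [vQuota, add_assoc, Nat.sub_add_cancel (Nat.one_le_iff_ne_zero.2 (by positivity))] at hle
      have hlo : n ^ 2 * (n + 1) ≤ n ^ 2 * (2 * a) := by linarith
      have hhi : n ^ 2 * (2 * a) < n ^ 2 * (3 * n + 1) := by rw [vQuota] at hlt; linarith
      exact absurd ⟨Nat.le_of_mul_le_mul_left hlo hn2,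
        Nat.lt_succ_iff.1 (Nat.lt_of_mul_lt_mul_left hhi)⟩ h2
    all_goals exact Nat.zero_le _
  have hcard : #{a ∈ range (2 * n + 2) | n + 1 ≤ 2 * a ∧ 2 * a ≤ 3 * n} ≤ n + 1 := by
    calc _ ≤ #(Icc ((n + 1) / 2) (3 * n / 2)) :=
          card_le_card fun a ha => by simp only [mem_filter, mem_Icc] at ha ⊢; omega
      _ ≤ n + 1 := by rw [Nat.card_Icc]; omega
  calc swingCount (vQuota n) (vWeight n) (vPlayers n) (2 * n + 1)
      ≤ ∑ a ∈ range (2 * n + 2), if n + 1 ≤ 2 * a ∧ 2 * a ≤ 3 * n then K else 0 :=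
        (swingCount_light_eq n).trans_le (sum_le_sum fun a _ => hterm a)
    _ = #{a ∈ range (2 * n + 2) | n + 1 ≤ 2 * a ∧ 2 * a ≤ 3 * n} * K := by
        rw [← sum_filter, sum_const, smul_eq_mul]
    _ ≤ (n + 1) * K := Nat.mul_le_mul_right K hcard
    _ = _ := by rw [Nat.add_one_mul_choose_eq, Nat.choose_symm_half]; ring

end WeightedGame

theorem stmt17 (n : ℕ) (hn : 11 ≤ n)
    (wt : ℕ → ℕ) (hwt : wt = fun i => if i < 2 * n + 1 then 2 * n ^ 2 else 1)
    (P : Finset ℕ) (hP : P = Finset.range (2 * n + 1 + 2 * n ^ 3)) :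
    (2.6 : ℝ) ^ n / (2 * (n : ℝ) + 1) ≤
      (swingCount (3 * n ^ 3 + n ^ 2) wt P 0 : ℝ) /
        (swingCount (3 * n ^ 3 + n ^ 2) wt P (2 * n + 1) : ℝ) := by
  subst hwt hP
  have hn1 : 1 ≤ n := by omega
  show (2.6 : ℝ) ^ n / (2 * (n : ℝ) + 1) ≤
    (swingCount (vQuota n) (vWeight n) (vPlayers n) 0 : ℝ) /
      (swingCount (vQuota n) (vWeight n) (vPlayers n) (2 * n + 1) : ℝ)
  have hheavy : ((2 * n).choose n * (2 * n ^ 3).choose (n ^ 3) : ℝ) ≤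
      swingCount (vQuota n) (vWeight n) (vPlayers n) 0 := by
    exact_mod_cast choose_mul_choose_le_swingCount_heavy hn1
  have hlight : (swingCount (vQuota n) (vWeight n) (vPlayers n) (2 * n + 1) : ℝ) ≤
      (2 * n + 1) * (2 * n).choose n * (2 * n ^ 3).choose (n ^ 3 + n ^ 2) := by
    exact_mod_cast swingCount_light_le hn1
  have hpos : (0 : ℝ) < swingCount (vQuota n) (vWeight n) (vPlayers n) (2 * n + 1) := by
    exact_mod_cast swingCount_light_pos hn1
  rw [div_le_div_iff₀ (by positivity) hpos]
  calc (2.6 : ℝ) ^ n * swingCount (vQuota n) (vWeight n) (vPlayers n) (2 * n + 1)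
      ≤ (2.6 : ℝ) ^ n * ((2 * n + 1) * (2 * n).choose n * (2 * n ^ 3).choose (n ^ 3 + n ^ 2)) := by
        gcongr
    _ = (2 * n + 1) * (2 * n).choose n * ((2.6 : ℝ) ^ n * (2 * n ^ 3).choose (n ^ 3 + n ^ 2)) := by
        ring
    _ ≤ (2 * n + 1) * (2 * n).choose n * (2 * n ^ 3).choose (n ^ 3) :=
        mul_le_mul_of_nonneg_left (two_point_six_pow_mul_choose_le hn) (by positivity)
    _ = (2 * n).choose n * (2 * n ^ 3).choose (n ^ 3) * (2 * n + 1) := by ring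
    _ ≤ _ := by gcongr
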